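/- Let I ⊆ {0,…,2^n−1} be UPO-compliant and let i ≠ j in {0,…,n−1} be such that the elementary permutation π_{E_{i,j}} is an automorphism of the code C(I). Then: (a) if i+1 ≤ n−1 and i+1 ≠ j, the permutation π_{E_{i+1,j}} is an automorphism of C(I); and (b) if j ≥ 1 and j−1 ≠ i, the permutation π_{E_{i,j−1}} is an automorphism of C(I). -/

import Mathlib

/-- Binary expansion of `i`, LSB first, as a vector over `𝔽₂` (`bin(i)_t` = `t`-th bit of `i`). -/
def binExp (n : ℕ) (i : ℕ) : Fin n → ZMod 2 := fun t => if Nat.testBit i t then 1 else 0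

/-- Integer corresponding to a binary vector (LSB first); inverse of `binExp`. -/
def vecToNat (n : ℕ) (v : Fin n → ZMod 2) : ℕ := ∑ t : Fin n, (v t).val * 2 ^ (t : ℕ)

lemma sum_two_pow (n : ℕ) : ∑ i ∈ Finset.range n, 2 ^ i = 2 ^ n - 1 := by
  induction n with
  | zero => simp
  | succ k ih =>
      rw [Finset.sum_range_succ, ih]
      have h1 : 1 ≤ 2 ^ k := Nat.one_le_two_pow
      have h2 : 2 ^ (k + 1) = 2 ^ k * 2 := pow_succ 2 k
      omega

lemma vecToNat_lt (n : ℕ) (v : Fin n → ZMod 2) : vecToNat n v < 2 ^ n := by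
  have h2 : vecToNat n v ≤ ∑ t : Fin n, 1 * 2 ^ (t : ℕ) := by
    refine Finset.sum_le_sum fun t _ => Nat.mul_le_mul_right _ ?_
    have : (v t).val < 2 := ZMod.val_lt (v t)
    omega
  have h3 : ∑ t : Fin n, 1 * 2 ^ (t : ℕ) = ∑ t ∈ Finset.range n, 2 ^ t := by
    simp [Fin.sum_univ_eq_sum_range]
  have h4 := sum_two_pow n
  have h5 : 1 ≤ 2 ^ n := Nat.one_le_two_pow
  unfold vecToNat at *
  omega

/-- The permutation `π_{(A,b)}` of `{0,…,2^n−1}` induced by the affine transformation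
`v ↦ A·v + b`, i.e. the map determined by `bin (π_{(A,b)} i) = A · bin i + b`. -/
def affinePerm (n : ℕ) (A : Matrix (Fin n) (Fin n) (ZMod 2)) (b : Fin n → ZMod 2)
    (i : Fin (2 ^ n)) : Fin (2 ^ n) :=
  ⟨vecToNat n (A.mulVec (binExp n i) + b), vecToNat_lt n _⟩


/-- The negative monomial `m_t = ∏_{i : bin(t)_i = 0} (1 + V_i)` as a boolean function. -/
def negMonomial (n : ℕ) (t : ℕ) : (Fin n → ZMod 2) → ZMod 2 :=
  fun v => ∏ i ∈ Finset.univ.filter (fun i : Fin n => ¬ Nat.testBit t i), (1 + v i)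

/-- Evaluation vector of a boolean function: `eval(f) = (f(bin 0),…,f(bin (2^n−1)))`. -/
def evalFun (n : ℕ) (f : (Fin n → ZMod 2) → ZMod 2) : Fin (2 ^ n) → ZMod 2 :=
  fun i => f (binExp n i)

/-- The monomial (polar) code `C(I)`: the `𝔽₂`-span of `{eval(m_t) : t ∈ I}`. -/
def code (n : ℕ) (I : Set ℕ) : Submodule (ZMod 2) (Fin (2 ^ n) → ZMod 2) :=
  Submodule.span (ZMod 2) {x | ∃ t ∈ I, x = evalFun n (negMonomial n t)}

/-- `π` is an automorphism of the code `C`: `(x_{π(0)},…,x_{π(N−1)}) ∈ C` for all `x ∈ C`. -/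
def IsCodeAut {N : ℕ} (C : Set (Fin N → ZMod 2)) (π : Fin N → Fin N) : Prop :=
  ∀ x ∈ C, (fun i => x (π i)) ∈ C


/-- One step of the universal partial order on indices: `i ◁ j`. -/
def polarCovers (n : ℕ) (i j : ℕ) : Prop :=
  (∃ t < n, Nat.testBit i t = false ∧ Nat.testBit j t = true ∧
      ∀ s, s ≠ t → Nat.testBit i s = Nat.testBit j s) ∨
  (∃ t, t + 1 < n ∧ Nat.testBit i t = true ∧ Nat.testBit i (t + 1) = false ∧
      Nat.testBit j t = false ∧ Nat.testBit j (t + 1) = true ∧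
      ∀ s, s ≠ t → s ≠ t + 1 → Nat.testBit i s = Nat.testBit j s)

/-- The polar (universal) partial order `⪯`: reflexive-transitive closure of `◁`. -/
def polarLE (n : ℕ) : ℕ → ℕ → Prop := Relation.ReflTransGen (polarCovers n)

/-- `I` is UPO-compliant: `i ⪯ j` (polar order) and `i ∈ I` imply `j ∈ I`. -/
def UPOCompliant (n : ℕ) (I : Set ℕ) : Prop :=
  ∀ i ∈ I, ∀ j < 2 ^ n, polarLE n i j → j ∈ I


/-- Elementary row-addition matrix `E_{i,j}`: identity plus an extra `1` in row `i`,
column `j`. -/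
def elemMat (n : ℕ) (i j : Fin n) : Matrix (Fin n) (Fin n) (ZMod 2) :=
  1 + Matrix.single i j 1

lemma binExp_vecToNat : ∀ (n : ℕ) (v : Fin n → ZMod 2), binExp n (vecToNat n v) = v := by
  intro n
  induction n with
  | zero => intro v; funext t; exact t.elim0
  | succ m ih =>
    intro v
    have hsplit : vecToNat (m+1) v = (v 0).val + 2 * vecToNat m (fun s => v s.succ) := by
      unfold vecToNat
      have h : ∀ s : Fin m, (v s.succ).val * 2 ^ ((s.succ : Fin (m+1)) : ℕ)
          = 2 * ((v s.succ).val * 2 ^ (s : ℕ)) := by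
        intro s; rw [Fin.val_succ, pow_succ]; ring
      rw [Fin.sum_univ_succ, Finset.sum_congr rfl fun s _ => h s, ← Finset.mul_sum]
      simp
    funext t
    have hv0 : (v 0).val < 2 := ZMod.val_lt _
    refine Fin.cases ?_ ?_ t
    · show (if Nat.testBit _ 0 then (1:ZMod 2) else 0) = v 0
      rw [hsplit, Nat.testBit_zero]
      have hmod : ((v 0).val + 2 * vecToNat m fun s => v s.succ) % 2 = (v 0).val := by omega
      rw [hmod]
      revert hv0; generalize v 0 = x; revert x; decide
    · intro s
      show (if Nat.testBit _ (s.succ : Fin (m+1)) then (1:ZMod 2) else 0) = v s.succ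
      have : ((s.succ : Fin (m+1)) : ℕ) = (s : ℕ) + 1 := rfl
      rw [this, hsplit, Nat.testBit_succ]
      have hdiv : ((v 0).val + 2 * vecToNat m fun s => v s.succ) / 2 = vecToNat m fun s => v s.succ := by omega
      rw [hdiv]
      have := congrFun (ih (fun s => v s.succ)) s
      exact this

lemma elemMat_mulVec (n : ℕ) (a b : Fin n) (v : Fin n → ZMod 2) :
    (elemMat n a b).mulVec v = fun k => if k = a then v a + v b else v k := by
  funext k
  unfold elemMat
  rw [Matrix.add_mulVec, Matrix.one_mulVec]
  have h : (Matrix.single a b (1:ZMod 2)).mulVec v k = if k = a then v b else 0 := by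
    rw [Matrix.single_mulVec]
    by_cases hk : k = a
    · subst hk; simp [Function.update]
    · simp [Function.update, hk]
  simp only [Pi.add_apply, h]
  by_cases hk : k = a <;> simp [hk]

lemma affinePerm_mul (n : ℕ) (A B : Matrix (Fin n) (Fin n) (ZMod 2)) (i : Fin (2^n)) :
    affinePerm n (A * B) 0 i = affinePerm n A 0 (affinePerm n B 0 i) := by
  unfold affinePerm
  simp only [add_zero]
  congr 1
  rw [binExp_vecToNat, Matrix.mulVec_mulVec]

lemma isCodeAut_comp {N : ℕ} (C : Set (Fin N → ZMod 2)) (π σ : Fin N → Fin N)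
    (hπ : IsCodeAut C π) (hσ : IsCodeAut C σ) : IsCodeAut C (fun k => π (σ k)) := by
  intro x hx
  exact hσ _ (hπ x hx)

lemma elemMat_commutator (n : ℕ) (a b c : Fin n) (hab : a ≠ b) (hbc : b ≠ c) (hac : a ≠ c) :
    elemMat n a b * elemMat n b c * elemMat n a b * elemMat n b c = elemMat n a c := by
  unfold elemMat
  have e1 : Matrix.single a b (1:ZMod 2) * Matrix.single b c 1
      = Matrix.single a c 1 := by
    rw [Matrix.single_mul_single_same]; ring_nf
  have e2 : Matrix.single a b (1:ZMod 2) * Matrix.single a b 1 = 0 :=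
    Matrix.single_mul_single_of_ne _ _ _ _ (Ne.symm hab) _
  have e3 : Matrix.single b c (1:ZMod 2) * Matrix.single a b 1 = 0 :=
    Matrix.single_mul_single_of_ne _ _ _ _ (Ne.symm hac) _
  have e4 : Matrix.single b c (1:ZMod 2) * Matrix.single b c 1 = 0 :=
    Matrix.single_mul_single_of_ne _ _ _ _ (Ne.symm hbc) _
  have e5 : Matrix.single a c (1:ZMod 2) * Matrix.single a b 1 = 0 :=
    Matrix.single_mul_single_of_ne _ _ _ _ (Ne.symm hac) _
  have e6 : Matrix.single a c (1:ZMod 2) * Matrix.single b c 1 = 0 :=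
    Matrix.single_mul_single_of_ne _ _ _ _ (Ne.symm hbc) _
  have h2 : ∀ M : Matrix (Fin n) (Fin n) (ZMod 2), M + M = 0 := by
    intro M; ext i j; simp [ZMod]
    have : ∀ x : ZMod 2, x + x = 0 := by decide
    exact this _
  simp only [mul_add, add_mul, one_mul, mul_one, e1, e2, e3, e4, e5, e6]
  abel_nf
  have h3 : ∀ M : Matrix (Fin n) (Fin n) (ZMod 2), (2:ℤ) • M = 0 := fun M => by
    rw [two_smul]; exact h2 M
  have h4 : ∀ M : Matrix (Fin n) (Fin n) (ZMod 2), (3:ℤ) • M = M := fun M => by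
    rw [show (3:ℤ) = 2 + 1 from rfl, add_smul, h3, one_smul, zero_add]
  rw [h3, h3, h4, h4]
  simp

lemma negMonomial_congr_set (n : ℕ) (t t' : ℕ)
    (h : ∀ s : Fin n, Nat.testBit t' s = Nat.testBit t s) (v : Fin n → ZMod 2) :
    negMonomial n t' v = negMonomial n t v := by
  unfold negMonomial
  exact Finset.prod_congr (by ext s; simp [h s]) (fun _ _ => rfl)

lemma key_pointwise (n : ℕ) (a b : Fin n) (hab : a ≠ b) (t : ℕ) (v : Fin n → ZMod 2) :
    negMonomial n t ((elemMat n a b).mulVec v) =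
      if Nat.testBit t (a : ℕ) then negMonomial n t v
      else if Nat.testBit t (b : ℕ) then
        negMonomial n (t ^^^ 2 ^ (a:ℕ)) v + negMonomial n (t ^^^ 2 ^ (a:ℕ) ^^^ 2 ^ (b:ℕ)) v
          + negMonomial n t v
      else negMonomial n t v := by
  rw [elemMat_mulVec]
  set w : Fin n → ZMod 2 := fun k => if k = a then v a + v b else v k with hw
  set F : Finset (Fin n) := Finset.univ.filter (fun i : Fin n => ¬ Nat.testBit t i) with hF
  have hmemF : ∀ s : Fin n, s ∈ F ↔ ¬ Nat.testBit t (s:ℕ) := by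
    intro s; simp [hF]
  by_cases hta : Nat.testBit t (a:ℕ)
  · -- a ∉ F, w = v on F
    rw [if_pos hta]
    refine Finset.prod_congr rfl fun s hs => ?_
    have hsa : s ≠ a := by
      intro h; subst h; exact (hmemF s).1 hs hta
    simp [hw, hsa]
  · rw [if_neg hta]
    have haF : a ∈ F := (hmemF a).2 hta
    -- pull out a
    have hLHS : ∏ s ∈ F, (1 + w s) = (1 + v a + v b) * ∏ s ∈ F.erase a, (1 + v s) := by
      rw [← Finset.mul_prod_erase F _ haF]
      congr 1
      · simp [hw, add_assoc]
      · refine Finset.prod_congr rfl fun s hs => ?_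
        have hsa : s ≠ a := Finset.ne_of_mem_erase hs
        simp [hw, hsa]
    have hRHS : negMonomial n t v = (1 + v a) * ∏ s ∈ F.erase a, (1 + v s) := by
      unfold negMonomial
      rw [← Finset.mul_prod_erase F _ haF]
    by_cases htb : Nat.testBit t (b:ℕ)
    · rw [if_pos htb]
      -- t' bits: F.erase a ; t'' bits: insert b (F.erase a)
      have hset' : Finset.univ.filter (fun i : Fin n => ¬ Nat.testBit (t ^^^ 2 ^ (a:ℕ)) i)
          = F.erase a := by
        ext s
        by_cases hsa : s = a
        · subst hsa; simp [Nat.testBit_xor, Nat.testBit_two_pow, hta]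
        · have hval : (a:ℕ) ≠ (s:ℕ) := fun h => hsa (Fin.ext h.symm)
          simp [hF, hsa, Nat.testBit_xor, Nat.testBit_two_pow, hval]
      have ht' : negMonomial n (t ^^^ 2 ^ (a:ℕ)) v = ∏ s ∈ F.erase a, (1 + v s) := by
        unfold negMonomial
        rw [hset']
      have hbF : b ∉ F.erase a := by
        intro h
        exact (hmemF b).1 (Finset.mem_of_mem_erase h) htb
      have hset'' : Finset.univ.filter
            (fun i : Fin n => ¬ Nat.testBit (t ^^^ 2 ^ (a:ℕ) ^^^ 2 ^ (b:ℕ)) i)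
          = insert b (F.erase a) := by
        ext s
        by_cases hsb : s = b
        · subst hsb
          have hval : (a:ℕ) ≠ (s:ℕ) := fun h => hab (Fin.ext h)
          simp [Nat.testBit_xor, Nat.testBit_two_pow, htb, hval]
        · have hvb : (b:ℕ) ≠ (s:ℕ) := fun h => hsb (Fin.ext h.symm)
          by_cases hsa : s = a
          · subst hsa; simp [Nat.testBit_xor, Nat.testBit_two_pow, hta, hvb, hsb]
          · have hva : (a:ℕ) ≠ (s:ℕ) := fun h => hsa (Fin.ext h.symm)
            simp [hF, hsa, hsb, Nat.testBit_xor, Nat.testBit_two_pow, hva, hvb]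
      have ht'' : negMonomial n (t ^^^ 2 ^ (a:ℕ) ^^^ 2 ^ (b:ℕ)) v
          = (1 + v b) * ∏ s ∈ F.erase a, (1 + v s) := by
        unfold negMonomial
        rw [hset'', Finset.prod_insert hbF]
      rw [negMonomial, ← hF, hLHS, ht', ht'', hRHS]
      generalize v a = x
      generalize v b = y
      generalize (∏ s ∈ F.erase a, (1 + v s)) = P
      have : ∀ x y : ZMod 2, (1 + x + y) = 1 + (1 + y) + (1 + x) := by decide
      rw [this]
      ring
    · rw [if_neg htb]
      have hbF : b ∈ F.erase a := Finset.mem_erase.2 ⟨Ne.symm hab, (hmemF b).2 htb⟩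
      rw [negMonomial, ← hF, hLHS, hRHS, ← Finset.mul_prod_erase _ _ hbF]
      generalize v a = x
      generalize v b = y
      generalize (∏ s ∈ (F.erase a).erase b, (1 + v s)) = P
      have : ∀ x y : ZMod 2, (1 + x + y) * (1 + y) = (1 + x) * (1 + y) := by decide
      rw [← mul_assoc, ← mul_assoc, this]

lemma gen_mem_code (n : ℕ) (I : Set ℕ) (t : ℕ) (ht : t ∈ I) :
    evalFun n (negMonomial n t) ∈ code n I :=
  Submodule.subset_span ⟨t, ht, rfl⟩

lemma two_pow_lt (n : ℕ) (a : Fin n) : 2 ^ (a:ℕ) < 2 ^ n :=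
  Nat.pow_lt_pow_right (by norm_num) a.isLt

lemma adjacent_aut (n : ℕ) (I : Set ℕ) (hI : ∀ i ∈ I, i < 2 ^ n)
    (hUPO : UPOCompliant n I) (a b : Fin n) (hba : (b:ℕ) + 1 = (a:ℕ)) :
    IsCodeAut (code n I : Set (Fin (2 ^ n) → ZMod 2)) (affinePerm n (elemMat n a b) 0) := by
  have hab : a ≠ b := fun h => by rw [h] at hba; omega
  intro x hx
  induction hx using Submodule.span_induction with
  | mem x hxm =>
    obtain ⟨t, ht, rfl⟩ := hxm
    have hfun : (fun k => evalFun n (negMonomial n t) (affinePerm n (elemMat n a b) 0 k))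
        = fun k : Fin (2^n) => negMonomial n t ((elemMat n a b).mulVec (binExp n k)) := by
      funext k
      show negMonomial n t (binExp n (vecToNat n _)) = _
      rw [binExp_vecToNat, add_zero]
    rw [hfun]
    by_cases hta : Nat.testBit t (a:ℕ)
    · have : (fun k : Fin (2^n) => negMonomial n t ((elemMat n a b).mulVec (binExp n k)))
          = evalFun n (negMonomial n t) := by
        funext k
        rw [key_pointwise n a b hab, if_pos hta]; rfl
      rw [this]; exact gen_mem_code n I t ht
    · by_cases htb : Nat.testBit t (b:ℕ)
      · set t' := t ^^^ 2 ^ (a:ℕ) with ht'def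
        set t'' := t ^^^ 2 ^ (a:ℕ) ^^^ 2 ^ (b:ℕ) with ht''def
        have hlt : t < 2 ^ n := hI t ht
        have hlt' : t' < 2 ^ n := Nat.xor_lt_two_pow hlt (two_pow_lt n a)
        have hlt'' : t'' < 2 ^ n := Nat.xor_lt_two_pow hlt' (two_pow_lt n b)
        have ht'I : t' ∈ I := by
          refine hUPO t ht t' hlt' (Relation.ReflTransGen.single (Or.inl ⟨(a:ℕ), a.isLt, ?_, ?_, ?_⟩))
          · simpa using hta
          · simp [ht'def, Nat.testBit_xor, Nat.testBit_two_pow, hta]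
          · intro s hs
            simp [ht'def, Nat.testBit_xor, Nat.testBit_two_pow, Ne.symm hs]
        have hab1 : ¬ ((a:ℕ) = (b:ℕ)) := by omega
        have hab2 : ¬ ((b:ℕ) = (a:ℕ)) := by omega
        have ht''I : t'' ∈ I := by
          refine hUPO t ht t'' hlt'' (Relation.ReflTransGen.single (Or.inr
            ⟨(b:ℕ), by omega, htb, by rw [hba]; simpa using hta, ?_, ?_, ?_⟩))
          · simp [ht''def, Nat.testBit_xor, Nat.testBit_two_pow, htb, hab1]
          · rw [hba]
            simp [ht''def, Nat.testBit_xor, Nat.testBit_two_pow, hta, hab2]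
          · intro s hs1 hs2
            rw [hba] at hs2
            have hs1' : ¬ ((b:ℕ) = s) := fun h => hs1 h.symm
            have hs2' : ¬ ((a:ℕ) = s) := fun h => hs2 h.symm
            simp [ht''def, Nat.testBit_xor, Nat.testBit_two_pow, hs1', hs2']
        have : (fun k : Fin (2^n) => negMonomial n t ((elemMat n a b).mulVec (binExp n k)))
            = evalFun n (negMonomial n t') + evalFun n (negMonomial n t'')
              + evalFun n (negMonomial n t) := by
          funext k
          rw [key_pointwise n a b hab, if_neg hta, if_pos htb]; rfl
        rw [this]
        exact add_mem (add_mem (gen_mem_code n I t' ht'I) (gen_mem_code n I t'' ht''I))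
          (gen_mem_code n I t ht)
      · have : (fun k : Fin (2^n) => negMonomial n t ((elemMat n a b).mulVec (binExp n k)))
            = evalFun n (negMonomial n t) := by
          funext k
          rw [key_pointwise n a b hab, if_neg hta, if_neg htb]; rfl
        rw [this]; exact gen_mem_code n I t ht
  | zero => exact Submodule.zero_mem _
  | add x y hx hy ihx ihy =>
    have : (fun k => (x + y) (affinePerm n (elemMat n a b) 0 k))
        = (fun k => x (affinePerm n (elemMat n a b) 0 k))
          + fun k => y (affinePerm n (elemMat n a b) 0 k) := rfl
    rw [this]; exact add_mem ihx ihy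
  | smul c x hx ihx =>
    have : (fun k => (c • x) (affinePerm n (elemMat n a b) 0 k))
        = c • fun k => x (affinePerm n (elemMat n a b) 0 k) := rfl
    rw [this]; exact Submodule.smul_mem _ _ ihx

lemma isCodeAut_mulMat (n : ℕ) (C : Set (Fin (2^n) → ZMod 2))
    (A B : Matrix (Fin n) (Fin n) (ZMod 2))
    (hA : IsCodeAut C (affinePerm n A 0)) (hB : IsCodeAut C (affinePerm n B 0)) :
    IsCodeAut C (affinePerm n (A * B) 0) := by
  have h : affinePerm n (A * B) 0 = fun i => affinePerm n A 0 (affinePerm n B 0 i) :=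
    funext (affinePerm_mul n A B)
  rw [h]
  exact isCodeAut_comp C _ _ hA hB

/-- If `I` is UPO-compliant and the elementary permutation `π_{E_{i,j}}` is an automorphism
of `C(I)`, then (a) `π_{E_{i+1,j}}` (when `i+1 ≤ n−1`, `i+1 ≠ j`) and (b) `π_{E_{i,j−1}}`
(when `j ≥ 1`, `j−1 ≠ i`) are automorphisms of `C(I)`. -/
theorem elementary_aut_neighbors (n : ℕ) (I : Set ℕ) (hI : ∀ i ∈ I, i < 2 ^ n)
    (hUPO : UPOCompliant n I) (i j : Fin n) (hij : i ≠ j)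
    (haut : IsCodeAut (code n I : Set (Fin (2 ^ n) → ZMod 2))
      (affinePerm n (elemMat n i j) 0)) :
    (∀ h : (i : ℕ) + 1 < n, (⟨(i : ℕ) + 1, h⟩ : Fin n) ≠ j →
        IsCodeAut (code n I : Set (Fin (2 ^ n) → ZMod 2))
          (affinePerm n (elemMat n ⟨(i : ℕ) + 1, h⟩ j) 0)) ∧
    (∀ _ : 0 < (j : ℕ), (⟨(j : ℕ) - 1, Nat.lt_of_le_of_lt (Nat.sub_le _ _) j.isLt⟩ : Fin n) ≠ i →
        IsCodeAut (code n I : Set (Fin (2 ^ n) → ZMod 2))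
          (affinePerm n
            (elemMat n i ⟨(j : ℕ) - 1, Nat.lt_of_le_of_lt (Nat.sub_le _ _) j.isLt⟩) 0)) := by
  constructor
  · intro h hne
    have hadj : IsCodeAut (code n I : Set (Fin (2 ^ n) → ZMod 2))
        (affinePerm n (elemMat n ⟨(i : ℕ) + 1, h⟩ i) 0) :=
      adjacent_aut n I hI hUPO ⟨(i : ℕ) + 1, h⟩ i rfl
    have hne1 : (⟨(i : ℕ) + 1, h⟩ : Fin n) ≠ i :=
      Fin.ne_of_val_ne (by show (i:ℕ) + 1 ≠ (i:ℕ); omega)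
    have hmat := elemMat_commutator n ⟨(i : ℕ) + 1, h⟩ i j hne1 hij hne
    have hres := isCodeAut_mulMat n _ _ _
      (isCodeAut_mulMat n _ _ _ (isCodeAut_mulMat n _ _ _ hadj haut) hadj) haut
    rwa [hmat] at hres
  · intro hj hne
    have hb' : ((⟨(j : ℕ) - 1, Nat.lt_of_le_of_lt (Nat.sub_le _ _) j.isLt⟩ : Fin n) : ℕ) + 1
        = (j : ℕ) := by show (j:ℕ) - 1 + 1 = (j:ℕ); omega
    have hadj : IsCodeAut (code n I : Set (Fin (2 ^ n) → ZMod 2))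
        (affinePerm n (elemMat n j ⟨(j : ℕ) - 1, Nat.lt_of_le_of_lt (Nat.sub_le _ _) j.isLt⟩) 0) :=
      adjacent_aut n I hI hUPO j _ hb'
    have hne2 : j ≠ (⟨(j : ℕ) - 1, Nat.lt_of_le_of_lt (Nat.sub_le _ _) j.isLt⟩ : Fin n) :=
      Fin.ne_of_val_ne (by show (j:ℕ) ≠ (j:ℕ) - 1; omega)
    have hmat := elemMat_commutator n i j
      ⟨(j : ℕ) - 1, Nat.lt_of_le_of_lt (Nat.sub_le _ _) j.isLt⟩ hij hne2 (Ne.symm hne)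
    have hres := isCodeAut_mulMat n _ _ _
      (isCodeAut_mulMat n _ _ _ (isCodeAut_mulMat n _ _ _ haut hadj) haut) hadj
    rwa [hmat] at hres
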